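/- For every k ≥ 2, every admissible sequence (j_1,…,j_{k−1}), and every positive integer i, the ratio of cylinder measures obtained by appending the digit j_k = h_{k−1}(j_{k−1}) + i satisfies λ(Δ_{j_1…j_{k−1}, h_{k−1}(j_{k−1})+i}) / λ(Δ_{j_1…j_{k−1}}) ≤ b_{k−1}(j_{k−1}) / (a_{k−1}(j_{k−1}) · j_{k−1} · (j_{k−1} − 1)). In particular the bound is uniform in i. -/

import Mathlib

open MeasureTheory Set

namespace ROE

/-- The `x`-sequence of the restricted Oppenheim algorithm applied to `x`:
index `k` corresponds to the paper's `x_{k+1}`, and `a k`, `b k` correspond to the paper's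
`a_{k+1}`, `b_{k+1}`.  So `X a b x 0 = x₁ = x` and
`x_{k+2} = (b_{k+1}(d_{k+1})/a_{k+1}(d_{k+1})) · (x_{k+1} - 1/d_{k+1})`. -/
noncomputable def X (a b : ℕ → ℕ → ℕ) (x : ℝ) : ℕ → ℝ
  | 0 => x
  | k + 1 =>
      let xk := X a b x k
      let d : ℕ := (⌊1 / xk⌋).toNat + 1
      ((b k d : ℝ) / (a k d : ℝ)) * (xk - 1 / (d : ℝ))

/-- The digit `d_{k+1}(x) = ⌊1/x_{k+1}⌋ + 1` of the restricted Oppenheim expansion. -/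
noncomputable def D (a b : ℕ → ℕ → ℕ) (x : ℝ) (k : ℕ) : ℕ :=
  (⌊1 / X a b x k⌋).toNat + 1

/-- The restricted Oppenheim expansion of `x` is infinite: all `x_n` lie in `(0,1)`. -/
def InfiniteROE (a b : ℕ → ℕ → ℕ) (x : ℝ) : Prop :=
  ∀ k, X a b x k ∈ Set.Ioo (0 : ℝ) 1

/-- The finite sequence `(j 0, …, j (n-1))` (the paper's `(j_1, …, j_n)`) is admissible:
`j_1 ≥ 2` and `j_{i+1} > h_i(j_i)`.  Here `h i` corresponds to the paper's `h_{i+1}`. -/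
def Admissible (h : ℕ → ℕ → ℕ) (n : ℕ) (j : ℕ → ℕ) : Prop :=
  2 ≤ j 0 ∧ ∀ i, i + 1 < n → h i (j i) < j (i + 1)

/-- The cylinder of rank `n` with base `(j 0, …, j (n-1))`: the set of `x ∈ (0,1)` with
infinite ROE whose first `n` digits are `j 0, …, j (n-1)`. -/
def cylinder (a b : ℕ → ℕ → ℕ) (n : ℕ) (j : ℕ → ℕ) : Set ℝ :=
  {x | x ∈ Set.Ioo (0 : ℝ) 1 ∧ InfiniteROE a b x ∧ ∀ i < n, D a b x i = j i}

/-- The difference-ROE digit `α_{k+1}(x)`: `α₁ = d₁ - 1`, `α_{k+2} = d_{k+2} - h_{k+1}(d_{k+1})`. -/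
noncomputable def alpha (a b h : ℕ → ℕ → ℕ) (x : ℝ) : ℕ → ℕ
  | 0 => D a b x 0 - 1
  | k + 1 => D a b x (k + 1) - h k (D a b x k)

/-- The digit sequence `d` reconstructed from a sequence `α` of difference-ROE symbols:
`d₁ = α₁ + 1`, `d_{k+2} = h_{k+1}(d_{k+1}) + α_{k+2}`. -/
def dSeq (h : ℕ → ℕ → ℕ) (α : ℕ → ℕ) : ℕ → ℕ
  | 0 => α 0 + 1
  | k + 1 => h k (dSeq h α k) + α (k + 1)

/-- The real number whose difference-ROE digits are `(α k)`:
`Φ(α) = Σ_{n≥1} (∏_{i=1}^{n-1} a_i(d_i)/b_i(d_i)) · (1/d_n)`. -/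
noncomputable def Phi (a b h : ℕ → ℕ → ℕ) (α : ℕ → ℕ) : ℝ :=
  ∑' n : ℕ, (∏ i ∈ Finset.range n, (a i (dSeq h α i) : ℝ) / (b i (dSeq h α i) : ℝ)) *
    (1 / (dSeq h α n : ℝ))

/-!
The first step of the expansion is inverted by the affine branch `t ↦ 1/d + (a/b)·t`, which maps
`(0, 1/h(d)]` onto `(1/d, 1/(d-1)]`. Hence a cylinder of rank `n+1` is, up to the point `1`, the
image under this branch of the part in `(0, 1/h(d)]` of a cylinder of rank `n` of the shifted
expansion, and its measure is `a/b` times the measure of that part. The points of `(0,1)` with a finite expansion are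
countable (each is the image of `1` under finitely many branches), so induction on the rank gives
`λ(Δ_{j_1…j_n}) = ∏_{i<n} (a_i(j_i)/b_i(j_i)) / (j_n (j_n - 1))`. With `H = h_{k-1}(j_{k-1})`
the ratio of consecutive cylinders is then `H / (j_k (j_k - 1))`, and `j_k > H` gives the bound.
-/

structure IsROEData (a b h : ℕ → ℕ → ℕ) : Prop where
  a_pos : ∀ k j, 2 ≤ j → 0 < a k j
  mul_h : ∀ k j, 2 ≤ j → b k j * h k j = a k j * j * (j - 1)

section Arithmetic

variable {A B H d : ℕ}

lemma pos_of_mul_eq (hd : 2 ≤ d) (hA : 0 < A) (hmul : B * H = A * d * (d - 1)) :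
    0 < B ∧ 0 < H :=
  CanonicallyOrderedAdd.mul_pos.mp (hmul ▸ Nat.mul_pos (Nat.mul_pos hA (by omega)) (by omega))

lemma cast_mul_eq (hd : 2 ≤ d) (hmul : B * H = A * d * (d - 1)) :
    (B : ℝ) * H = A * d * (d - 1) := by
  have := congrArg (Nat.cast : ℕ → ℝ) hmul
  push_cast [Nat.cast_sub (by omega : 1 ≤ d)] at this
  exact this

lemma div_mul_one_div_eq (hd : 2 ≤ d) (hA : 0 < A) (hmul : B * H = A * d * (d - 1)) :
    (A : ℝ) / B * (1 / H) = 1 / (d * (d - 1)) := by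
  obtain ⟨hB, hH⟩ := pos_of_mul_eq hd hA hmul
  have hd' : (2 : ℝ) ≤ d := by exact_mod_cast hd
  have : (A : ℝ) ≠ 0 := by positivity
  have : (B : ℝ) ≠ 0 := by positivity
  have : (H : ℝ) ≠ 0 := by positivity
  have : (d : ℝ) - 1 ≠ 0 := by linarith
  field_simp
  linear_combination (cast_mul_eq hd hmul).symm

lemma one_div_add_mul_mem_Ioc_iff (hd : 2 ≤ d) (hA : 0 < A) (hmul : B * H = A * d * (d - 1))
    {t : ℝ} : 1 / (d : ℝ) + A / B * t ∈ Ioc (1 / (d : ℝ)) (1 / ((d : ℝ) - 1)) ↔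
      t ∈ Ioc 0 (1 / (H : ℝ)) := by
  obtain ⟨hB, -⟩ := pos_of_mul_eq hd hA hmul
  have hr : (0 : ℝ) < A / B := by positivity
  have hd' : (2 : ℝ) ≤ d := by exact_mod_cast hd
  have : (d : ℝ) - 1 ≠ 0 := by linarith
  have hend : 1 / ((d : ℝ) - 1) = 1 / d + A / B * (1 / H) := by
    rw [div_mul_one_div_eq hd hA hmul]
    field_simp
    ring
  rw [hend, mem_Ioc, mem_Ioc, lt_add_iff_pos_right, add_le_add_iff_left,
    mul_pos_iff_of_pos_left hr, mul_le_mul_iff_right₀ hr]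

lemma ratio_bound_of_lt (hd : 2 ≤ d) (hA : 0 < A) (hmul : B * H = A * d * (d - 1)) {J : ℕ}
    (hJ : H < J) {P : ℝ} (hP : 0 ≤ P) :
    P * (A / B) / (J * (J - 1)) ≤ B / (A * d * (d - 1)) * (P / (d * (d - 1))) := by
  obtain ⟨hB, hH⟩ := pos_of_mul_eq hd hA hmul
  have hA' : (0 : ℝ) < A := by exact_mod_cast hA
  have hB' : (0 : ℝ) < B := by exact_mod_cast hB
  have hd' : (2 : ℝ) ≤ d := by exact_mod_cast hd
  have hJ' : (H : ℝ) + 1 ≤ J := by exact_mod_cast hJ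
  have hH' : (0 : ℝ) < H := by exact_mod_cast hH
  have hdd : (0 : ℝ) < d * (d - 1) := by nlinarith
  have hAB : (A : ℝ) / B = H / (d * (d - 1)) := by
    rw [div_eq_div_iff (by positivity) hdd.ne', ← mul_assoc, ← cast_mul_eq hd hmul]
    ring
  have hBA : (B : ℝ) / (A * d * (d - 1)) = 1 / H := by
    rw [div_eq_div_iff (by rw [mul_assoc]; exact (mul_pos hA' hdd).ne') hH'.ne',
      ← cast_mul_eq hd hmul]
    ring
  have hsq : (H : ℝ) / (J * (J - 1)) ≤ 1 / H := by
    rw [div_le_div_iff₀ (by nlinarith) hH']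
    nlinarith
  calc P * (A / B) / (J * (J - 1)) = H / (J * (J - 1)) * (P / (d * (d - 1))) := by
        rw [hAB]; ring
    _ ≤ 1 / H * (P / (d * (d - 1))) := by gcongr
    _ = _ := by rw [hBA]

end Arithmetic

section Digits

variable {a b h : ℕ → ℕ → ℕ}

lemma IsROEData.b_pos (hab : IsROEData a b h) {k d : ℕ} (hd : 2 ≤ d) : 0 < b k d :=
  (pos_of_mul_eq hd (hab.a_pos k d hd) (hab.mul_h k d hd)).1

lemma IsROEData.h_pos (hab : IsROEData a b h) {k d : ℕ} (hd : 2 ≤ d) : 0 < h k d :=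
  (pos_of_mul_eq hd (hab.a_pos k d hd) (hab.mul_h k d hd)).2

lemma IsROEData.tail (hab : IsROEData a b h) :
    IsROEData (fun k => a (k + 1)) (fun k => b (k + 1)) (fun k => h (k + 1)) :=
  ⟨fun k => hab.a_pos (k + 1), fun k => hab.mul_h (k + 1)⟩

lemma D_eq_iff {x : ℝ} {k d : ℕ} (hd : 2 ≤ d) :
    D a b x k = d ↔ X a b x k ∈ Ioc (1 / (d : ℝ)) (1 / ((d : ℝ) - 1)) := by
  obtain ⟨n, rfl⟩ : ∃ n, d = n + 1 := ⟨d - 1, by omega⟩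
  rw [D, Int.floor_toNat, add_left_inj, Nat.floor_eq_iff' (by omega)]
  push_cast
  rw [add_sub_cancel_right]
  set y := X a b x k
  have hn : (0 : ℝ) < n := by exact_mod_cast (by omega : 0 < n)
  have iff_of_pos (hy : 0 < y) :
      (n ≤ 1 / y ∧ 1 / y < n + 1) ↔ y ∈ Ioc (1 / ((n : ℝ) + 1)) (1 / n) := by
    rw [le_one_div hn hy, one_div_lt hy (by positivity), mem_Ioc, and_comm]
  constructor
  · exact fun hy => (iff_of_pos (one_div_pos.mp (hn.trans_le hy.1))).mp hy
  · exact fun hy => (iff_of_pos ((one_div_pos.mpr (by positivity)).trans hy.1)).mpr hy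

lemma two_le_D {x : ℝ} {k : ℕ} (hx : X a b x k ∈ Ioo 0 1) : 2 ≤ D a b x k := by
  have : 1 ≤ ⌊1 / X a b x k⌋₊ := Nat.le_floor (by simpa using one_le_one_div hx.1 hx.2.le)
  rw [D, Int.floor_toNat]
  omega

lemma X_one (x : ℝ) :
    X a b x 1 = b 0 (D a b x 0) / a 0 (D a b x 0) * (x - 1 / (D a b x 0 : ℝ)) :=
  rfl

lemma X_succ_eq_tail (x : ℝ) (k : ℕ) :
    X a b x (k + 1) = X (fun i => a (i + 1)) (fun i => b (i + 1)) (X a b x 1) k := by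
  induction k with
  | zero => rfl
  | succ k ih => rw [X, ih]; rfl

lemma D_succ_eq_tail (x : ℝ) (k : ℕ) :
    D a b x (k + 1) = D (fun i => a (i + 1)) (fun i => b (i + 1)) (X a b x 1) k := by
  rw [D, D, X_succ_eq_tail]

end Digits

noncomputable def branch (a b : ℕ → ℕ → ℕ) (d : ℕ) (t : ℝ) : ℝ :=
  1 / (d : ℝ) + a 0 d / b 0 d * t

section Branch

open scoped Pointwise in
lemma volume_image_branch (a b : ℕ → ℕ → ℕ) (d : ℕ) (s : Set ℝ) :
    volume (branch a b d '' s) = ENNReal.ofReal (a 0 d / b 0 d) * volume s := by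
  have : 0 ≤ (a 0 d : ℝ) / b 0 d := by positivity
  rw [show branch a b d '' s = (1 / (d : ℝ) + ·) '' ((a 0 d / b 0 d : ℝ) • s) by
      rw [← image_smul, image_image]; rfl,
    image_add_left, measure_preimage_add, Measure.addHaar_smul, Module.finrank_self, pow_one,
    abs_of_nonneg this]

variable {a b h : ℕ → ℕ → ℕ}

lemma branch_mem_Ioc_iff (hab : IsROEData a b h) {d : ℕ} (hd : 2 ≤ d) {t : ℝ} :
    branch a b d t ∈ Ioc (1 / (d : ℝ)) (1 / ((d : ℝ) - 1)) ↔
      t ∈ Ioc 0 (1 / (h 0 d : ℝ)) :=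
  one_div_add_mul_mem_Ioc_iff hd (hab.a_pos 0 d hd) (hab.mul_h 0 d hd)

lemma branch_D_X_one (hab : IsROEData a b h) {x : ℝ} (hx : x ∈ Ioo 0 1) :
    branch a b (D a b x 0) (X a b x 1) = x := by
  have hd := two_le_D (a := a) (b := b) (k := 0) hx
  have : (a 0 (D a b x 0) : ℝ) ≠ 0 := by exact_mod_cast (hab.a_pos 0 _ hd).ne'
  have : (b 0 (D a b x 0) : ℝ) ≠ 0 := by exact_mod_cast (hab.b_pos hd).ne'
  rw [branch, X_one]
  field_simp
  ring

lemma X_one_mem_Ioc (hab : IsROEData a b h) {x : ℝ} (hx : x ∈ Ioo 0 1) :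
    X a b x 1 ∈ Ioc 0 (1 / (h 0 (D a b x 0) : ℝ)) := by
  have hd := two_le_D (a := a) (b := b) (k := 0) hx
  rw [← branch_mem_Ioc_iff hab hd, branch_D_X_one hab hx]
  exact (D_eq_iff hd).mp rfl

lemma D_branch (hab : IsROEData a b h) {d : ℕ} (hd : 2 ≤ d) {t : ℝ}
    (ht : t ∈ Ioc 0 (1 / (h 0 d : ℝ))) :
    D a b (branch a b d t) 0 = d :=
  (D_eq_iff hd).mpr ((branch_mem_Ioc_iff hab hd).mpr ht)

lemma X_one_branch (hab : IsROEData a b h) {d : ℕ} (hd : 2 ≤ d) {t : ℝ}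
    (ht : t ∈ Ioc 0 (1 / (h 0 d : ℝ))) :
    X a b (branch a b d t) 1 = t := by
  have : (a 0 d : ℝ) ≠ 0 := by exact_mod_cast (hab.a_pos 0 d hd).ne'
  have : (b 0 d : ℝ) ≠ 0 := by exact_mod_cast (hab.b_pos hd).ne'
  rw [X_one, D_branch hab hd ht, branch]
  field_simp
  ring

end Branch

section Countable

variable {a b h : ℕ → ℕ → ℕ}

lemma countable_setOf_X_notMem_Ioo (hab : IsROEData a b h) (n : ℕ) :
    {x : ℝ | x ∈ Ioo 0 1 ∧ X a b x n ∉ Ioo 0 1}.Countable := by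
  induction n generalizing a b h with
  | zero => exact countable_empty.mono fun x hx => hx.2 hx.1
  | succ n ih =>
    refine (countable_iUnion fun d : ℕ => ((ih hab.tail).insert 1).image (branch a b d)).mono ?_
    rintro x ⟨hx, hxn⟩
    refine mem_iUnion.2 ⟨D a b x 0, X a b x 1, ?_, branch_D_X_one hab hx⟩
    obtain ⟨ht0, ht⟩ := X_one_mem_Ioc hab hx
    have hH : (1 : ℝ) ≤ h 0 (D a b x 0) := by exact_mod_cast hab.h_pos (two_le_D (k := 0) hx)
    rcases (ht.trans (div_le_one_of_le₀ hH (by positivity))).eq_or_lt with ht1 | ht1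
    · exact Or.inl ht1
    · exact mem_insert_of_mem _ ⟨⟨ht0, ht1⟩, X_succ_eq_tail (a := a) (b := b) x n ▸ hxn⟩

lemma countable_setOf_not_infiniteROE (hab : IsROEData a b h) :
    {x : ℝ | x ∈ Ioo 0 1 ∧ ¬ InfiniteROE a b x}.Countable := by
  refine (countable_iUnion (countable_setOf_X_notMem_Ioo hab)).mono ?_
  rintro x ⟨hx, hinf⟩
  obtain ⟨n, hn⟩ := not_forall.mp hinf
  exact mem_iUnion.2 ⟨n, hx, hn⟩

lemma volume_cylinder_zero_inter_Ioc (hab : IsROEData a b h) (j : ℕ → ℕ) {u : ℝ}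
    (hu : u ≤ 1) :
    volume (cylinder a b 0 j ∩ Ioc 0 u) = ENNReal.ofReal u := by
  have hnull : (Ioc 0 u \ cylinder a b 0 j).Countable := by
    refine ((countable_setOf_not_infiniteROE hab).insert 1).mono ?_
    rintro t ⟨⟨ht0, htu⟩, htc⟩
    rcases (htu.trans hu).eq_or_lt with rfl | ht1
    · exact mem_insert _ _
    · exact mem_insert_of_mem _
        ⟨⟨ht0, ht1⟩, fun hinf => htc ⟨⟨ht0, ht1⟩, hinf, nofun⟩⟩
  rw [inter_comm, ← sdiff_sdiff_right_self, measure_sdiff_null (hnull.measure_zero _),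
    Real.volume_Ioc, sub_zero]

end Countable

section Admissible

variable {a b h : ℕ → ℕ → ℕ} {n : ℕ} {j : ℕ → ℕ}

lemma Admissible.two_le (hab : IsROEData a b h) (hadm : Admissible h n j) :
    ∀ i < n, 2 ≤ j i := by
  intro i
  induction i with
  | zero => exact fun _ => hadm.1
  | succ i ih =>
    intro hi
    have := hab.h_pos (k := i) (ih (by omega))
    have := hadm.2 i hi
    omega

lemma Admissible.tail (hab : IsROEData a b h) (hadm : Admissible h (n + 2) j) :
    Admissible (fun k => h (k + 1)) (n + 1) (fun k => j (k + 1)) :=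
  ⟨hadm.two_le hab 1 (by omega), fun i hi => hadm.2 (i + 1) (by omega)⟩

lemma Admissible.update_succ (hadm : Admissible h (n + 1) j) {J : ℕ} (hJ : h n (j n) < J) :
    Admissible h (n + 2) (Function.update j (n + 1) J) := by
  refine ⟨by rw [Function.update_of_ne (by omega)]; exact hadm.1, fun i hi => ?_⟩
  rw [Function.update_of_ne (by omega)]
  rcases (show i + 1 < n + 1 ∨ i = n by omega) with hi | rfl
  · rw [Function.update_of_ne (by omega)]
    exact hadm.2 i hi
  · rwa [Function.update_self]

end Admissible

section Cylinder

variable {a b h : ℕ → ℕ → ℕ} {n : ℕ} {j : ℕ → ℕ}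

lemma cylinder_succ_subset_image (hab : IsROEData a b h) :
    cylinder a b (n + 1) j ⊆ branch a b (j 0) ''
      (cylinder (fun k => a (k + 1)) (fun k => b (k + 1)) n (fun k => j (k + 1)) ∩
        Ioc 0 (1 / (h 0 (j 0) : ℝ))) := by
  rintro x ⟨hx, hinf, hdig⟩
  have hd : D a b x 0 = j 0 := hdig 0 n.succ_pos
  refine ⟨X a b x 1, ⟨⟨hinf 1, fun k => ?_, fun i hi => ?_⟩, hd ▸ X_one_mem_Ioc hab hx⟩,
    hd ▸ branch_D_X_one hab hx⟩
  · exact X_succ_eq_tail x k ▸ hinf (k + 1)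
  · exact D_succ_eq_tail x i ▸ hdig (i + 1) (by omega)

lemma image_subset_insert_cylinder_succ (hab : IsROEData a b h) (hj : 2 ≤ j 0) :
    branch a b (j 0) ''
        (cylinder (fun k => a (k + 1)) (fun k => b (k + 1)) n (fun k => j (k + 1)) ∩
          Ioc 0 (1 / (h 0 (j 0) : ℝ))) ⊆
      insert 1 (cylinder a b (n + 1) j) := by
  rintro _ ⟨t, ⟨⟨ht, hinf, hdig⟩, htu⟩, rfl⟩
  have hX1 := X_one_branch hab hj htu
  obtain ⟨hlo, hhi⟩ := (branch_mem_Ioc_iff hab hj).mpr htu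
  have hj' : (2 : ℝ) ≤ j 0 := by exact_mod_cast hj
  rcases (hhi.trans (div_le_one_of_le₀ (by linarith) (by linarith))).eq_or_lt with h1 | h1
  · exact Or.inl h1
  refine mem_insert_of_mem _ ⟨⟨(one_div_pos.mpr (by positivity)).trans hlo, h1⟩, ?_, ?_⟩
  · rintro (_ | k)
    · exact ⟨(one_div_pos.mpr (by positivity)).trans hlo, h1⟩
    · rw [X_succ_eq_tail, hX1]
      exact hinf k
  · rintro (_ | i) hi
    · exact D_branch hab hj htu
    · rw [D_succ_eq_tail, hX1]
      exact hdig i (by omega)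

lemma volume_cylinder_succ_eq_mul (hab : IsROEData a b h) (hj : 2 ≤ j 0) :
    volume (cylinder a b (n + 1) j) = ENNReal.ofReal (a 0 (j 0) / b 0 (j 0)) *
      volume (cylinder (fun k => a (k + 1)) (fun k => b (k + 1)) n (fun k => j (k + 1)) ∩
        Ioc 0 (1 / (h 0 (j 0) : ℝ))) := by
  rw [← volume_image_branch]
  refine le_antisymm (measure_mono (cylinder_succ_subset_image hab)) ?_
  rw [← measure_congr (insert_ae_eq_self 1 (cylinder a b (n + 1) j))]
  exact measure_mono (image_subset_insert_cylinder_succ hab hj)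

lemma cylinder_succ_subset_Ioc (hj : 2 ≤ j 0) :
    cylinder a b (n + 1) j ⊆ Ioc (1 / (j 0 : ℝ)) (1 / ((j 0 : ℝ) - 1)) :=
  fun _ hx => (D_eq_iff hj).mp (hx.2.2 0 n.succ_pos)

theorem volume_cylinder (hab : IsROEData a b h) (hadm : Admissible h (n + 1) j) :
    volume (cylinder a b (n + 1) j) = ENNReal.ofReal
      ((∏ i ∈ Finset.range n, (a i (j i) : ℝ) / b i (j i)) / (j n * (j n - 1))) := by
  induction n generalizing a b h j with
  | zero =>
    have hj := hadm.1
    have hH : (1 : ℝ) ≤ h 0 (j 0) := by exact_mod_cast hab.h_pos hj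
    rw [volume_cylinder_succ_eq_mul hab hj,
      volume_cylinder_zero_inter_Ioc hab.tail _ (div_le_one_of_le₀ hH (by positivity)),
      ← ENNReal.ofReal_mul (by positivity),
      div_mul_one_div_eq hj (hab.a_pos 0 _ hj) (hab.mul_h 0 _ hj), Finset.prod_range_zero,
      one_div]
  | succ n ih =>
    have hj := hadm.1
    have hH : (0 : ℝ) < h 0 (j 0) := by exact_mod_cast hab.h_pos hj
    have hj1 : (h 0 (j 0) : ℝ) + 1 ≤ j 1 := by exact_mod_cast hadm.2 0 (by omega)
    have hsub : cylinder (fun k => a (k + 1)) (fun k => b (k + 1)) (n + 1) (fun k => j (k + 1)) ⊆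
        Ioc 0 (1 / (h 0 (j 0) : ℝ)) :=
      (cylinder_succ_subset_Ioc (hadm.two_le hab 1 (by omega))).trans
        (Ioc_subset_Ioc (by positivity) (one_div_le_one_div_of_le hH (by linarith)))
    rw [volume_cylinder_succ_eq_mul hab hj, inter_eq_left.mpr hsub,
      ih hab.tail (hadm.tail hab), ← ENNReal.ofReal_mul (by positivity),
      Finset.prod_range_succ' _ n]
    congr 1
    ring

end Cylinder

theorem cylinder_ratio_bound_general (a b h : ℕ → ℕ → ℕ)
    (ha : ∀ k j, 2 ≤ j → 0 < a k j)
    (hab : ∀ k j, 2 ≤ j → b k j * h k j = a k j * j * (j - 1))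
    (m : ℕ) (hm : 1 ≤ m) (j : ℕ → ℕ) (hadm : Admissible h m j)
    (i : ℕ) (hi : 1 ≤ i) :
    volume (cylinder a b (m + 1) (Function.update j m (h (m - 1) (j (m - 1)) + i))) /
        volume (cylinder a b m j) ≤
      ENNReal.ofReal ((b (m - 1) (j (m - 1)) : ℝ) /
        ((a (m - 1) (j (m - 1)) : ℝ) * (j (m - 1) : ℝ) * ((j (m - 1) : ℝ) - 1))) := by
  obtain ⟨n, rfl⟩ : ∃ n, m = n + 1 := ⟨m - 1, by omega⟩
  have hdata : IsROEData a b h := ⟨ha, hab⟩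
  have hd := hadm.two_le hdata n n.lt_succ_self
  simp only [Nat.add_sub_cancel]
  set J := h n (j n) + i
  have hprod : ∀ k ∈ Finset.range (n + 1), (a k (Function.update j (n + 1) J k) : ℝ) /
      b k (Function.update j (n + 1) J k) = a k (j k) / b k (j k) := fun k hk => by
    rw [Function.update_of_ne (Finset.mem_range.mp hk).ne]
  rw [volume_cylinder hdata (hadm.update_succ (by omega : h n (j n) < J)),
    volume_cylinder hdata hadm, Finset.prod_congr rfl hprod, Function.update_self,
    Finset.prod_range_succ]
  refine ENNReal.div_le_of_le_mul ?_
  have hd' : (1 : ℝ) ≤ j n := by exact_mod_cast (by omega : 1 ≤ j n)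
  rw [← ENNReal.ofReal_mul
    (div_nonneg (by positivity) (mul_nonneg (by positivity) (sub_nonneg.mpr hd')))]
  exact ENNReal.ofReal_le_ofReal (ratio_bound_of_lt hd (ha n _ hd) (hab n _ hd) (by omega)
    (Finset.prod_nonneg fun _ _ => by positivity))

/-- For every `k ≥ 2` (here `k = m + 1` with `m ≥ 1`), every admissible
`(j_1, …, j_{k-1})` and every positive integer `i`, appending the digit
`j_k = h_{k-1}(j_{k-1}) + i` gives
`λ(Δ_{j_1…j_{k-1}, h_{k-1}(j_{k-1}) + i}) / λ(Δ_{j_1…j_{k-1}})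
  ≤ b_{k-1}(j_{k-1}) / (a_{k-1}(j_{k-1}) · j_{k-1} · (j_{k-1} - 1))`,
a bound uniform in `i`. -/
theorem cylinder_ratio_bound (a b h : ℕ → ℕ → ℕ)
    (ha : ∀ k j, 2 ≤ j → 0 < a k j) (hb : ∀ k j, 2 ≤ j → 0 < b k j)
    (hpos : ∀ k j, 2 ≤ j → 0 < h k j)
    (hab : ∀ k j, 2 ≤ j → b k j * h k j = a k j * j * (j - 1))
    (m : ℕ) (hm : 1 ≤ m) (j : ℕ → ℕ) (hadm : Admissible h m j)
    (i : ℕ) (hi : 1 ≤ i) :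
    volume (cylinder a b (m + 1) (Function.update j m (h (m - 1) (j (m - 1)) + i))) /
        volume (cylinder a b m j) ≤
      ENNReal.ofReal ((b (m - 1) (j (m - 1)) : ℝ) /
        ((a (m - 1) (j (m - 1)) : ℝ) * (j (m - 1) : ℝ) * ((j (m - 1) : ℝ) - 1))) :=
  cylinder_ratio_bound_general a b h ha hab m hm j hadm i hi

end ROE
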